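/- For every real q with 0<q<1, A_3(q) = A_2(q) + 36A_1(q)² − 24A_0(q)A_2(q). -/

import Mathlib

/-!
Write `A_i = Σ c_i(m) q^m` with `c_i(m) = m^i σ(m) = Σ_{de = m} d^(i+1) e^i`. By the Cauchy
product the claim is an identity between coefficients, and the coefficient of `q^n` in
`36 A_1² - 24 A_0 A_2` is the sum of `36 a²x b²y - 24 a b³y²` over the solutions of
`ax + by = n` in positive integers. Liouville's method evaluates such sums: split them according to
`x ≷ y` and `a ≷ b`, use the symmetry `(a, x) ↔ (b, y)`, and use the bijection
`((a, x), (b, y)) ↦ ((b, x + y), (a - b, x))` from `{b < a}` onto `{y < x}`. For a suitable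
splitting of the summand into two polynomials, all off-diagonal parts cancel, and what remains are
the diagonals `x = y` and `a = b`, whose sums are power sums over the divisors of `n` adding up to
`n³σ(n) - n²σ(n)`.
-/

/-- `A i (q) = Σ_{m≥1} m^i σ(m) q^m` where `σ(m)` is the sum of positive divisors of `m`. -/
noncomputable def A (q : ℝ) (i : ℕ) : ℝ :=
  ∑' m : ℕ, (m : ℝ) ^ i * (∑ d ∈ Nat.divisors m, (d : ℝ)) * q ^ m

open Finset

theorem sum_eq_sum_filter_eq_add_sum_filter_lt_swap {α β M : Type*} [LinearOrder β]
    [AddCommMonoid M] (s : Finset (α × α)) (hs : ∀ p ∈ s, p.swap ∈ s) (π : α → β)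
    (f : α × α → M) :
    ∑ p ∈ s, f p =
      ∑ p ∈ s with π p.1 = π p.2, f p +
        ∑ p ∈ s with π p.2 < π p.1, (f p + f p.swap) := by
  have hswap : ∑ p ∈ s with π p.1 < π p.2, f p = ∑ p ∈ s with π p.2 < π p.1, f p.swap :=
    sum_nbij' Prod.swap Prod.swap (by simp +contextual [hs]) (by simp +contextual [hs])
      (fun _ _ => rfl) (fun _ _ => rfl) (fun _ _ => rfl)
  rw [sum_add_distrib, ← hswap, ← sum_filter_add_sum_filter_not s (fun p => π p.1 = π p.2),
    ← sum_filter_add_sum_filter_not (s.filter fun p => ¬π p.1 = π p.2)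
      (fun p => π p.2 < π p.1),
    filter_filter, filter_filter]
  congr 2 <;> refine sum_congr (filter_congr fun p _ => ?_) fun _ _ => rfl
  · exact and_iff_right_of_imp ne_of_gt
  · grind

namespace Liouville

def reps (n : ℕ) : Finset ((ℕ × ℕ) × (ℕ × ℕ)) :=
  (antidiagonal n).biUnion fun kl => kl.1.divisorsAntidiagonal ×ˢ kl.2.divisorsAntidiagonal

theorem mem_reps {n a x b y : ℕ} :
    ((a, x), (b, y)) ∈ reps n ↔ a * x + b * y = n ∧ 0 < a ∧ 0 < x ∧ 0 < b ∧ 0 < y := by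
  simp only [reps, mem_biUnion, HasAntidiagonal.mem_antidiagonal, mem_product,
    Nat.mem_divisorsAntidiagonal, Prod.exists]
  constructor
  · rintro ⟨k, l, rfl, ⟨rfl, hk⟩, ⟨rfl, hl⟩⟩
    simp_all [Nat.pos_iff_ne_zero]
  · rintro ⟨rfl, ha, hx, hb, hy⟩
    exact ⟨_, _, rfl, ⟨rfl, by positivity⟩, ⟨rfl, by positivity⟩⟩

theorem swap_mem_reps {n : ℕ} {p : (ℕ × ℕ) × (ℕ × ℕ)} (hp : p ∈ reps n) :
    p.swap ∈ reps n := by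
  obtain ⟨⟨a, x⟩, ⟨b, y⟩⟩ := p
  rw [mem_reps] at hp
  obtain ⟨rfl, ha, hx, hb, hy⟩ := hp
  exact mem_reps.2 ⟨add_comm _ _, hb, hy, ha, hx⟩

theorem sum_antidiagonal_mul_sum_divisorsAntidiagonal {M : Type*} [CommSemiring M] (n : ℕ)
    (F G : ℕ × ℕ → M) :
    ∑ kl ∈ antidiagonal n, (∑ z ∈ kl.1.divisorsAntidiagonal, F z) *
        ∑ w ∈ kl.2.divisorsAntidiagonal, G w =
      ∑ p ∈ reps n, F p.1 * G p.2 := by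
  rw [reps, sum_biUnion]
  · simp only [sum_mul_sum, sum_product]
  · intro kl _ kl' _ hne
    refine disjoint_left.2 fun p hp hp' => hne ?_
    simp only [mem_product, Nat.mem_divisorsAntidiagonal] at hp hp'
    exact Prod.ext (hp.1.1.symm.trans hp'.1.1) (hp.2.1.symm.trans hp'.2.1)

theorem sum_reps_filter_fst_lt_eq_sum_filter_snd_lt {M : Type*} [AddCommMonoid M] (n : ℕ)
    (G : (ℕ × ℕ) × (ℕ × ℕ) → M) :
    ∑ p ∈ reps n with p.2.1 < p.1.1, G ((p.2.1, p.1.2 + p.2.2), (p.1.1 - p.2.1, p.1.2)) =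
      ∑ p ∈ reps n with p.2.2 < p.1.2, G p := by
  refine sum_nbij' (fun p => ((p.2.1, p.1.2 + p.2.2), (p.1.1 - p.2.1, p.1.2)))
    (fun p => ((p.1.1 + p.2.1, p.2.2), (p.1.1, p.1.2 - p.2.2))) ?_ ?_ ?_ ?_ fun _ _ => rfl
  · rintro ⟨⟨a, x⟩, ⟨b, y⟩⟩
    simp only [mem_filter, mem_reps]
    rintro ⟨⟨rfl, ha, hx, hb, hy⟩, hba⟩
    obtain ⟨c, rfl⟩ := Nat.exists_eq_add_of_le hba.le
    refine ⟨⟨?_, hb, by omega, by omega, hx⟩, by omega⟩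
    rw [Nat.add_sub_cancel_left]
    ring
  · rintro ⟨⟨a, x⟩, ⟨b, y⟩⟩
    simp only [mem_filter, mem_reps]
    rintro ⟨⟨rfl, ha, hx, hb, hy⟩, hyx⟩
    obtain ⟨c, rfl⟩ := Nat.exists_eq_add_of_le hyx.le
    refine ⟨⟨?_, by omega, hy, ha, by omega⟩, by omega⟩
    rw [Nat.add_sub_cancel_left]
    ring
  · rintro ⟨⟨a, x⟩, ⟨b, y⟩⟩ hp
    obtain ⟨c, rfl⟩ : ∃ c, a = b + c := Nat.exists_eq_add_of_le (mem_filter.1 hp).2.le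
    simp
  · rintro ⟨⟨a, x⟩, ⟨b, y⟩⟩ hp
    obtain ⟨c, rfl⟩ : ∃ c, x = y + c := Nat.exists_eq_add_of_le (mem_filter.1 hp).2.le
    simp

theorem sum_reps_filter_snd_eq {M : Type*} [AddCommMonoid M] (n : ℕ)
    (f : (ℕ × ℕ) × (ℕ × ℕ) → M) :
    ∑ p ∈ reps n with p.1.2 = p.2.2, f p =
      ∑ de ∈ n.divisorsAntidiagonal, ∑ c ∈ Ico 1 de.1, f ((de.1 - c, de.2), (c, de.2)) := by
  rw [sum_sigma']
  symm
  refine (sum_nbij' (fun z => ((z.1.1 - z.2, z.1.2), (z.2, z.1.2)))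
    (fun p => ⟨(p.1.1 + p.2.1, p.1.2), p.2.1⟩) ?_ ?_ ?_ ?_ fun _ _ => rfl)
  · rintro ⟨⟨d, e⟩, c⟩
    simp only [mem_sigma, Nat.mem_divisorsAntidiagonal, mem_Ico, mem_filter, mem_reps]
    rintro ⟨⟨rfl, hde⟩, hc, hcd⟩
    obtain ⟨k, rfl⟩ := Nat.exists_eq_add_of_le hcd.le
    refine ⟨⟨?_, by omega, Nat.pos_of_ne_zero (right_ne_zero_of_mul hde), hc,
      Nat.pos_of_ne_zero (right_ne_zero_of_mul hde)⟩, trivial⟩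
    rw [Nat.add_sub_cancel_left]
    ring
  · rintro ⟨⟨a, x⟩, ⟨b, y⟩⟩
    simp only [mem_sigma, Nat.mem_divisorsAntidiagonal, mem_Ico, mem_filter, mem_reps]
    rintro ⟨⟨rfl, ha, hx, hb, hy⟩, rfl⟩
    exact ⟨⟨by ring, by positivity⟩, hb, by omega⟩
  · rintro ⟨⟨d, e⟩, c⟩ hz
    obtain ⟨k, rfl⟩ : ∃ k, d = c + k :=
      Nat.exists_eq_add_of_le (mem_Ico.1 (mem_sigma.1 hz).2).2.le
    simp [add_comm]
  · rintro ⟨⟨a, x⟩, ⟨b, y⟩⟩ hp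
    obtain rfl : x = y := (mem_filter.1 hp).2
    simp

theorem sum_reps_filter_fst_eq {M : Type*} [AddCommMonoid M] (n : ℕ)
    (f : (ℕ × ℕ) × (ℕ × ℕ) → M) :
    ∑ p ∈ reps n with p.1.1 = p.2.1, f p =
      ∑ de ∈ n.divisorsAntidiagonal, ∑ c ∈ Ico 1 de.2, f ((de.1, de.2 - c), (de.1, c)) := by
  rw [sum_sigma']
  symm
  refine (sum_nbij' (fun z => ((z.1.1, z.1.2 - z.2), (z.1.1, z.2)))
    (fun p => ⟨(p.1.1, p.1.2 + p.2.2), p.2.2⟩) ?_ ?_ ?_ ?_ fun _ _ => rfl)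
  · rintro ⟨⟨d, e⟩, c⟩
    simp only [mem_sigma, Nat.mem_divisorsAntidiagonal, mem_Ico, mem_filter, mem_reps]
    rintro ⟨⟨rfl, hde⟩, hc, hce⟩
    obtain ⟨k, rfl⟩ := Nat.exists_eq_add_of_le hce.le
    refine ⟨⟨?_, Nat.pos_of_ne_zero (left_ne_zero_of_mul hde), by omega,
      Nat.pos_of_ne_zero (left_ne_zero_of_mul hde), hc⟩, trivial⟩
    rw [Nat.add_sub_cancel_left]
    ring
  · rintro ⟨⟨a, x⟩, ⟨b, y⟩⟩
    simp only [mem_sigma, Nat.mem_divisorsAntidiagonal, mem_Ico, mem_filter, mem_reps]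
    rintro ⟨⟨rfl, ha, hx, hb, hy⟩, rfl⟩
    exact ⟨⟨by ring, by positivity⟩, hy, by omega⟩
  · rintro ⟨⟨d, e⟩, c⟩ hz
    obtain ⟨k, rfl⟩ : ∃ k, e = c + k :=
      Nat.exists_eq_add_of_le (mem_Ico.1 (mem_sigma.1 hz).2).2.le
    simp [add_comm]
  · rintro ⟨⟨a, x⟩, ⟨b, y⟩⟩ hp
    obtain rfl : a = b := (mem_filter.1 hp).2
    simp

theorem sum_reps_add_sum_reps {M : Type*} [AddCommGroup M] (n : ℕ)
    (f g : (ℕ × ℕ) × (ℕ × ℕ) → M)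
    (hfg : ∀ a b x y : ℕ, f ((b, x + y), (a, x)) + f ((a, x), (b, x + y)) +
      g ((a + b, x), (b, y)) + g ((b, y), (a + b, x)) = 0) :
    ∑ p ∈ reps n, f p + ∑ p ∈ reps n, g p =
      ∑ p ∈ reps n with p.1.2 = p.2.2, f p + ∑ p ∈ reps n with p.1.1 = p.2.1, g p := by
  have hswap : ∀ p ∈ reps n, p.swap ∈ reps n := fun _ => swap_mem_reps
  have hcancel : ∑ p ∈ reps n with p.2.2 < p.1.2, (f p + f p.swap) =
      -∑ p ∈ reps n with p.2.1 < p.1.1, (g p + g p.swap) := by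
    rw [← sum_reps_filter_fst_lt_eq_sum_filter_snd_lt, ← sum_neg_distrib]
    refine sum_congr rfl fun p hp => eq_neg_of_add_eq_zero_left ?_
    have hba := (mem_filter.1 hp).2
    simpa only [Nat.sub_add_cancel hba.le, Prod.swap, ← add_assoc] using
      hfg (p.1.1 - p.2.1) p.2.1 p.1.2 p.2.2
  rw [sum_eq_sum_filter_eq_add_sum_filter_lt_swap _ hswap Prod.snd f,
    sum_eq_sum_filter_eq_add_sum_filter_lt_swap _ hswap Prod.fst g, hcancel]
  abel

end Liouville

open Liouville

theorem sum_range_cast_mul_two {R : Type*} [CommRing R] (m : ℕ) :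
    (∑ c ∈ range m, (c : R)) * 2 = m * (m - 1) := by
  induction m with
  | zero => simp
  | succ m ih => rw [sum_range_succ, add_mul, ih]; push_cast; ring

theorem sum_range_cast_sq_mul_six {R : Type*} [CommRing R] (m : ℕ) :
    (∑ c ∈ range m, (c : R) ^ 2) * 6 = m * (m - 1) * (2 * m - 1) := by
  induction m with
  | zero => simp
  | succ m ih => rw [sum_range_succ, add_mul, ih]; push_cast; ring

theorem sum_range_cast_cube_mul_four {R : Type*} [CommRing R] (m : ℕ) :
    (∑ c ∈ range m, (c : R) ^ 3) * 4 = (m * (m - 1)) ^ 2 := by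
  induction m with
  | zero => simp
  | succ m ih => rw [sum_range_succ, add_mul, ih]; push_cast; ring

theorem sum_Ico_one_eq_sum_range {M : Type*} [AddCommMonoid M] {f : ℕ → M} (hf : f 0 = 0)
    (m : ℕ) : ∑ c ∈ Ico 1 m, f c = ∑ c ∈ range m, f c := by
  rcases m.eq_zero_or_pos with rfl | hm
  · simp
  · rw [sum_range_eq_add_Ico f hm, hf, zero_add]

theorem sum_reps_eq_sum_divisorsAntidiagonal (n : ℕ) :
    ∑ p ∈ reps n, (36 * ((p.1.1 : ℝ) ^ 2 * p.1.2 * (p.2.1 ^ 2 * p.2.2)) -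
        24 * (p.1.1 * (p.2.1 ^ 3 * p.2.2 ^ 2))) =
      ∑ de ∈ n.divisorsAntidiagonal, ((de.1 : ℝ) ^ 4 * de.2 ^ 3 - de.1 ^ 3 * de.2 ^ 2) := by
  let φ : (ℕ × ℕ) × (ℕ × ℕ) → ℝ := fun ((a, x), (b, y)) =>
    36 * (a ^ 2 * x * (b ^ 2 * y)) - 24 * (a * (b ^ 3 * y ^ 2))
  -- `k` solves the linear conditions that `sum_reps_add_sum_reps` imposes on the coefficients of
  -- `φ / 2 + k` and `φ / 2 - k`, among polynomials of degree 4 in `a, b` and 2 in `x, y`.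
  let k : (ℕ × ℕ) × (ℕ × ℕ) → ℝ := fun ((a, x), (b, y)) =>
    16 * a * b ^ 3 * x * y - 12 * a ^ 2 * b ^ 2 * y ^ 2 - 2 * b ^ 4 * y ^ 2
  have h := sum_reps_add_sum_reps n (fun p => φ p / 2 + k p) (fun p => φ p / 2 - k p)
    (fun a b x y => by simp only [φ, k]; push_cast; ring)
  rw [← sum_add_distrib, sum_reps_filter_snd_eq, sum_reps_filter_fst_eq, ← sum_add_distrib] at h
  simp only [add_add_sub_cancel, add_halves] at h
  rw [h]
  refine sum_congr rfl fun ⟨d, e⟩ _ => ?_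
  have hxy : ∑ c ∈ Ico 1 d, (φ ((d - c, e), (c, e)) / 2 + k ((d - c, e), (c, e))) =
      ∑ c ∈ range d, (6 * d ^ 2 * e ^ 2 * (c : ℝ) ^ 2 - 8 * d * e ^ 2 * (c : ℝ) ^ 3) := by
    rw [sum_Ico_one_eq_sum_range (by simp [φ, k])]
    refine sum_congr rfl fun c hc => ?_
    simp only [φ, k, Nat.cast_sub (mem_range.1 hc).le]
    ring
  have hab : ∑ c ∈ Ico 1 e, (φ ((d, e - c), (d, c)) / 2 - k ((d, e - c), (d, c))) =
      ∑ c ∈ range e, 2 * d ^ 4 * e * (c : ℝ) := by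
    rw [sum_Ico_one_eq_sum_range (by simp [φ, k])]
    refine sum_congr rfl fun c hc => ?_
    simp only [φ, k, Nat.cast_sub (mem_range.1 hc).le]
    ring
  rw [hxy, hab, sum_sub_distrib, ← mul_sum, ← mul_sum, ← mul_sum]
  linear_combination (d ^ 2 * e ^ 2 : ℝ) * sum_range_cast_sq_mul_six (R := ℝ) d -
    (2 * d * e ^ 2 : ℝ) * sum_range_cast_cube_mul_four (R := ℝ) d +
    (d ^ 4 * e : ℝ) * sum_range_cast_mul_two (R := ℝ) e

def sigmaCoeff (i m : ℕ) : ℝ :=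
  (m : ℝ) ^ i * ∑ d ∈ m.divisors, (d : ℝ)

theorem sigmaCoeff_eq_sum_divisorsAntidiagonal (i m : ℕ) :
    sigmaCoeff i m = ∑ z ∈ m.divisorsAntidiagonal, (z.1 : ℝ) ^ (i + 1) * (z.2 : ℝ) ^ i := by
  rw [sigmaCoeff, ← Nat.sum_divisorsAntidiagonal fun d _ => (d : ℝ), mul_sum]
  refine sum_congr rfl fun z hz => ?_
  rw [← (Nat.mem_divisorsAntidiagonal.1 hz).1]
  push_cast
  ring

theorem sigmaCoeff_three_sub_sigmaCoeff_two (n : ℕ) :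
    sigmaCoeff 3 n - sigmaCoeff 2 n =
      ∑ kl ∈ antidiagonal n, (36 * (sigmaCoeff 1 kl.1 * sigmaCoeff 1 kl.2) -
        24 * (sigmaCoeff 0 kl.1 * sigmaCoeff 2 kl.2)) := by
  rw [sum_sub_distrib, ← mul_sum, ← mul_sum]
  simp only [sigmaCoeff_eq_sum_divisorsAntidiagonal, sum_antidiagonal_mul_sum_divisorsAntidiagonal]
  rw [← sum_sub_distrib, ← sum_reps_eq_sum_divisorsAntidiagonal, mul_sum, mul_sum,
    ← sum_sub_distrib]
  exact sum_congr rfl fun p _ => by ring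

theorem sigmaCoeff_nonneg (i m : ℕ) : 0 ≤ sigmaCoeff i m := by
  unfold sigmaCoeff
  positivity

theorem sigmaCoeff_le (i m : ℕ) : sigmaCoeff i m ≤ (m : ℝ) ^ (i + 2) := by
  have hσ : ∑ d ∈ m.divisors, (d : ℝ) ≤ (m : ℝ) ^ 2 := by
    have : ∑ d ∈ m.divisors, d ≤ m ^ 2 := by
      simpa [ArithmeticFunction.sigma_one_apply] using ArithmeticFunction.sigma_le_pow_succ 1 m
    simpa using (Nat.cast_le (α := ℝ)).2 this
  rw [sigmaCoeff, pow_add]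
  gcongr

theorem summable_norm_sigmaCoeff_mul_pow {q : ℝ} (hq : ‖q‖ < 1) (i : ℕ) :
    Summable fun m => ‖sigmaCoeff i m * q ^ m‖ := by
  refine .of_nonneg_of_le (fun _ => norm_nonneg _) (fun m => ?_)
    (summable_pow_mul_geometric_of_norm_lt_one (i + 2) (r := ‖q‖) (by rwa [norm_norm]))
  rw [norm_mul, norm_pow, Real.norm_of_nonneg (sigmaCoeff_nonneg i m)]
  gcongr
  exact sigmaCoeff_le i m

theorem hasSum_sum_antidiagonal_mul_pow {R : Type*} [NormedCommRing R] [CompleteSpace R]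
    {f g : ℕ → R} {q : R} (hf : Summable fun m => ‖f m * q ^ m‖)
    (hg : Summable fun m => ‖g m * q ^ m‖) :
    HasSum (fun n => (∑ kl ∈ antidiagonal n, f kl.1 * g kl.2) * q ^ n)
      ((∑' m, f m * q ^ m) * ∑' m, g m * q ^ m) := by
  have hcoeff : ∀ n, ∑ kl ∈ antidiagonal n, f kl.1 * q ^ kl.1 * (g kl.2 * q ^ kl.2) =
      (∑ kl ∈ antidiagonal n, f kl.1 * g kl.2) * q ^ n := fun n => by
    rw [sum_mul]
    refine sum_congr rfl fun kl hkl => ?_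
    rw [← mem_antidiagonal.1 hkl, pow_add]
    ring
  rw [tsum_mul_tsum_eq_tsum_sum_antidiagonal_of_summable_norm hf hg]
  simpa only [hcoeff] using
    (summable_norm_sum_mul_antidiagonal_of_summable_norm hf hg).of_norm.hasSum

theorem stmt18 (q : ℝ) (hq0 : 0 < q) (hq1 : q < 1) :
    A q 3 = A q 2 + 36 * (A q 1) ^ 2 - 24 * A q 0 * A q 2 := by
  have hq : ‖q‖ < 1 := by rwa [Real.norm_of_nonneg hq0.le]
  have hs := summable_norm_sigmaCoeff_mul_pow hq
  have hA : ∀ i, A q i = ∑' m, sigmaCoeff i m * q ^ m := fun _ => rfl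
  have hlhs : HasSum (fun n => (sigmaCoeff 3 n - sigmaCoeff 2 n) * q ^ n) (A q 3 - A q 2) := by
    simp only [sub_mul, hA]
    exact (hs 3).of_norm.hasSum.sub (hs 2).of_norm.hasSum
  have hrhs : HasSum (fun n => (sigmaCoeff 3 n - sigmaCoeff 2 n) * q ^ n)
      (36 * (A q 1 * A q 1) - 24 * (A q 0 * A q 2)) := by
    simp only [sigmaCoeff_three_sub_sigmaCoeff_two, sum_sub_distrib, ← mul_sum, sub_mul,
      mul_assoc, hA]
    exact ((hasSum_sum_antidiagonal_mul_pow (hs 1) (hs 1)).mul_left 36).sub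
      ((hasSum_sum_antidiagonal_mul_pow (hs 0) (hs 2)).mul_left 24)
  linear_combination hlhs.unique hrhs
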